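/- Let $f : \mathbb{R} \to \mathbb{R}$ be positive with $\lim_{r \to \infty} f(r/l)/f(r/l') = 0$ whenever $0 < l < l'$. Fix $r_0 \ge 1$ an integer and define $S_{t,\nu,l}(d) = 2t^2 + \sum_{n=-r_0}^{r_0} \nu^2 f((d-n)/l)^2$ for $t, \nu, l > 0$. Suppose also that $f(x)^2 \to 0$ as $x \to \infty$ (exponential decay). If $S_{t,\nu,l}(d) = S_{t',\nu',l'}(d)$ for all $d \ge 0$ with $t,t',\nu,\nu',l,l' > 0$, then $t = t'$, $l = l'$, and $\nu = \nu'$. -/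

import Mathlib

/-
As `d → ∞` every term `ν² f((d - n)/l)²` tends to `0`, so `S_{t,ν,l}(d) → 2t²` and `t = t'`.
The remaining identity `ν² W_l(d) = ν'² W_{l'}(d)`, with `W_l(d) = ∑ₙ f((d - n)/l)²`, is
impossible for `l < l'`: termwise `f((d - n)/l)² / f((d - n)/l')² → 0`, hence
`W_l / W_{l'} → 0`, which would force `ν' = 0`. So `l = l'`, and evaluating at `d = 0`
(where `W_l(0) > 0`) gives `ν² = ν'²`.
-/

open Filter Topology

/-- Truncated second-moment function with general interlayer hopping profile `f`. -/
noncomputable def StruncMom (f : ℝ → ℝ) (r0 : ℕ) (t ν l d : ℝ) : ℝ :=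
  2 * t ^ 2 + ∑ n ∈ Finset.Icc (-(r0 : ℤ)) (r0 : ℤ), ν ^ 2 * (f ((d - (n : ℝ)) / l)) ^ 2

lemma tendsto_sub_const_atTop (c : ℝ) : Tendsto (fun d : ℝ => d - c) atTop atTop :=
  (tendsto_atTop_add_const_right atTop (-c) tendsto_id).congr fun d => (sub_eq_add_neg d c).symm

lemma tendsto_sum_div_sum_zero {α ι : Type*} {L : Filter α} (s : Finset ι) {u v : ι → α → ℝ}
    (hu : ∀ i x, 0 ≤ u i x) (hv : ∀ i x, 0 < v i x)
    (h : ∀ i ∈ s, Tendsto (fun x => u i x / v i x) L (𝓝 0)) :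
    Tendsto (fun x => (∑ i ∈ s, u i x) / ∑ i ∈ s, v i x) L (𝓝 0) := by
  have hsum : Tendsto (fun x => ∑ i ∈ s, u i x / v i x) L (𝓝 0) := by
    simpa only [Finset.sum_const_zero] using tendsto_finsetSum s h
  -- `(∑ u) / ∑ v ≤ ∑ (u i / v i)`, since each `v i ≤ ∑ v`
  refine squeeze_zero (fun x => div_nonneg (Finset.sum_nonneg fun i _ => hu i x)
    (Finset.sum_nonneg fun i _ => (hv i x).le)) (fun x => ?_) hsum
  rw [Finset.sum_div]
  exact Finset.sum_le_sum fun i hi => div_le_div_of_nonneg_left (hu i x) (hv i x)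
    (Finset.single_le_sum (fun j _ => (hv j x).le) hi)

noncomputable def windowSum (f : ℝ → ℝ) (r0 : ℕ) (l d : ℝ) : ℝ :=
  ∑ n ∈ Finset.Icc (-(r0 : ℤ)) (r0 : ℤ), f ((d - (n : ℝ)) / l) ^ 2

lemma StruncMom_eq_add_mul_windowSum (f : ℝ → ℝ) (r0 : ℕ) (t ν l d : ℝ) :
    StruncMom f r0 t ν l d = 2 * t ^ 2 + ν ^ 2 * windowSum f r0 l d := by
  rw [StruncMom, windowSum, Finset.mul_sum]

lemma windowSum_pos {f : ℝ → ℝ} (hfpos : ∀ x, 0 < f x) (r0 : ℕ) (l d : ℝ) :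
    0 < windowSum f r0 l d :=
  Finset.sum_pos (fun n _ => pow_pos (hfpos _) 2) ⟨0, by simp⟩

lemma tendsto_windowSum_zero {f : ℝ → ℝ} (hf0 : Tendsto (fun x => f x ^ 2) atTop (𝓝 0))
    (r0 : ℕ) {l : ℝ} (hl : 0 < l) : Tendsto (windowSum f r0 l) atTop (𝓝 0) := by
  unfold windowSum
  simpa only [Finset.sum_const_zero, Function.comp_def] using tendsto_finsetSum _ fun (n : ℤ) _ =>
    hf0.comp ((tendsto_sub_const_atTop n).atTop_div_const hl)

lemma tendsto_StruncMom {f : ℝ → ℝ} (hf0 : Tendsto (fun x => f x ^ 2) atTop (𝓝 0))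
    (r0 : ℕ) (t ν : ℝ) {l : ℝ} (hl : 0 < l) :
    Tendsto (StruncMom f r0 t ν l) atTop (𝓝 (2 * t ^ 2)) := by
  have h := tendsto_const_nhds (x := 2 * t ^ 2) (f := atTop (α := ℝ)) |>.add
    ((tendsto_windowSum_zero hf0 r0 hl).const_mul (ν ^ 2))
  simpa only [mul_zero, add_zero, ← StruncMom_eq_add_mul_windowSum] using h

lemma tendsto_windowSum_div_windowSum_zero {f : ℝ → ℝ} (hfpos : ∀ x, 0 < f x)
    (hdecaysq : ∀ l l' : ℝ, 0 < l → l < l' →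
      Tendsto (fun r : ℝ => f (r / l) ^ 2 / f (r / l') ^ 2) atTop (𝓝 0))
    (r0 : ℕ) {l l' : ℝ} (hl : 0 < l) (hll' : l < l') :
    Tendsto (fun d => windowSum f r0 l d / windowSum f r0 l' d) atTop (𝓝 0) :=
  tendsto_sum_div_sum_zero _ (fun _ _ => sq_nonneg _) (fun _ _ => pow_pos (hfpos _) 2)
    fun (n : ℤ) _ => (hdecaysq l l' hl hll').comp (tendsto_sub_const_atTop n)

lemma eq_zero_of_eventually_mul_windowSum_eq {f : ℝ → ℝ} (hfpos : ∀ x, 0 < f x)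
    (hdecaysq : ∀ l l' : ℝ, 0 < l → l < l' →
      Tendsto (fun r : ℝ => f (r / l) ^ 2 / f (r / l') ^ 2) atTop (𝓝 0))
    (r0 : ℕ) {ν ν' l l' : ℝ} (hl : 0 < l) (hll' : l < l')
    (h : ∀ᶠ d in atTop, ν ^ 2 * windowSum f r0 l d = ν' ^ 2 * windowSum f r0 l' d) :
    ν' = 0 := by
  have hlim : Tendsto (fun d => ν ^ 2 * (windowSum f r0 l d / windowSum f r0 l' d))
      atTop (𝓝 0) := by
    simpa only [mul_zero] using
      (tendsto_windowSum_div_windowSum_zero hfpos hdecaysq r0 hl hll').const_mul (ν ^ 2)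
  have hconst : (fun d => ν ^ 2 * (windowSum f r0 l d / windowSum f r0 l' d)) =ᶠ[atTop]
      fun _ => ν' ^ 2 := by
    filter_upwards [h] with d hd
    rw [← mul_div_assoc, hd, mul_div_cancel_right₀ _ (windowSum_pos hfpos r0 l' d).ne']
  exact pow_eq_zero_iff two_ne_zero |>.mp (tendsto_nhds_unique (hlim.congr' hconst)
    tendsto_const_nhds).symm

theorem stmt9_general (f : ℝ → ℝ) (hfpos : ∀ x, 0 < f x)
    (hdecaysq : ∀ l l' : ℝ, 0 < l → l < l' →
      Tendsto (fun r : ℝ => (f (r / l)) ^ 2 / (f (r / l')) ^ 2) atTop (nhds 0))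
    (hf0 : Tendsto (fun x : ℝ => (f x) ^ 2) atTop (nhds 0))
    (r0 : ℕ)
    (t ν l t' ν' l' : ℝ)
    (ht : 0 < t) (hν : 0 < ν) (hl : 0 < l)
    (ht' : 0 < t') (hν' : 0 < ν') (hl' : 0 < l')
    (hS : ∀ d : ℝ, 0 ≤ d → StruncMom f r0 t ν l d = StruncMom f r0 t' ν' l' d) :
    t = t' ∧ l = l' ∧ ν = ν' := by
  have hSev : StruncMom f r0 t ν l =ᶠ[atTop] StruncMom f r0 t' ν' l' :=
    eventually_ge_atTop 0 |>.mono hS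
  have htt : t = t' := by
    have h := tendsto_nhds_unique ((tendsto_StruncMom hf0 r0 t ν hl).congr' hSev)
      (tendsto_StruncMom hf0 r0 t' ν' hl')
    exact (sq_eq_sq₀ ht.le ht'.le).mp (by linarith)
  have hW : ∀ d, 0 ≤ d → ν ^ 2 * windowSum f r0 l d = ν' ^ 2 * windowSum f r0 l' d := by
    intro d hd
    have h := hS d hd
    rw [StruncMom_eq_add_mul_windowSum, StruncMom_eq_add_mul_windowSum, htt] at h
    linarith
  have hll : l = l' := by
    rcases lt_trichotomy l l' with h | h | h
    · exact absurd (eq_zero_of_eventually_mul_windowSum_eq hfpos hdecaysq r0 hl h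
        (eventually_ge_atTop 0 |>.mono hW)) hν'.ne'
    · exact h
    · exact absurd (eq_zero_of_eventually_mul_windowSum_eq hfpos hdecaysq r0 hl' h
        (eventually_ge_atTop 0 |>.mono fun d hd => (hW d hd).symm)) hν.ne'
  have hνν : ν ^ 2 = ν' ^ 2 := by
    have h := hW 0 le_rfl
    rw [← hll] at h
    exact mul_right_cancel₀ (windowSum_pos hfpos r0 l 0).ne' h
  exact ⟨htt, hll, (sq_eq_sq₀ hν.le hν'.le).mp hνν⟩

/-- identifiability of `(t, l, ν)` from the truncated second-moment
function for a positive, decay-separated hopping profile `f`. -/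
theorem stmt9 (f : ℝ → ℝ) (hfpos : ∀ x, 0 < f x)
    (hdecay : ∀ l l' : ℝ, 0 < l → l < l' →
      Tendsto (fun r : ℝ => f (r / l) / f (r / l')) atTop (nhds 0))
    (hdecaysq : ∀ l l' : ℝ, 0 < l → l < l' →
      Tendsto (fun r : ℝ => (f (r / l)) ^ 2 / (f (r / l')) ^ 2) atTop (nhds 0))
    (hf0 : Tendsto (fun x : ℝ => (f x) ^ 2) atTop (nhds 0))
    (r0 : ℕ) (hr0 : 1 ≤ r0)
    (t ν l t' ν' l' : ℝ)
    (ht : 0 < t) (hν : 0 < ν) (hl : 0 < l)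
    (ht' : 0 < t') (hν' : 0 < ν') (hl' : 0 < l')
    (hS : ∀ d : ℝ, 0 ≤ d → StruncMom f r0 t ν l d = StruncMom f r0 t' ν' l' d) :
    t = t' ∧ l = l' ∧ ν = ν' :=
  stmt9_general f hfpos hdecaysq hf0 r0 t ν l t' ν' l' ht hν hl ht' hν' hl' hS
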